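/- Suppose the integer k ≥ 0 satisfies ν := k − n/2 + 1 > 0 (equivalently k > n/2 − 1). Then the steady-state density has a finite limit at the origin: 𝒜_k(z) → (μ(λB)^k / (k! (4πD)^{n/2})) · Γ(ν) · λ^{−ν} as z → 0⁺, where Γ is the Gamma function. -/

import Mathlib

open Real MeasureTheory Set Filter Topology

/-- The steady-state generation-`k` density in the normalized distance
`z = |x|√(λ/D)` from the origin:
`𝒜_k(z) = (μ(λB)^k/(k!(4πD)^{n/2})) ∫₀^∞ s^{k−n/2} exp(−λs − z²/(4λs)) ds`. -/
noncomputable def steadyDensity (n : ℕ) (lam D B mu : ℝ) (k : ℕ) (z : ℝ) : ℝ :=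
  (mu * (lam * B) ^ k / ((Nat.factorial k : ℝ) * (4 * π * D) ^ ((n : ℝ) / 2))) *
    ∫ s in Set.Ioi (0:ℝ),
      s ^ ((k : ℝ) - (n : ℝ) / 2) * Real.exp (-lam * s - z ^ 2 / (4 * lam * s))

/-! Since `exp (-z² / (4λs)) ≤ 1`, the integrand is dominated by `s ^ (k - n/2) * exp (-λ s)`,
which is integrable on `(0, ∞)` exactly when `ν > 0`. Dominated convergence lets `z → 0⁺` under
the integral, and the limit is the Gamma integral `∫₀^∞ s ^ (ν - 1) e^{-λ s} ds = Γ(ν) λ^{-ν}`. -/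

lemma integral_rpow_mul_exp_neg_mul_Ioi_eq_Gamma {a b : ℝ} (ha : -1 < a) (hb : 0 < b) :
    ∫ s in Ioi (0 : ℝ), s ^ a * exp (-b * s) = Gamma (a + 1) * b ^ (-(a + 1)) := by
  have h := integral_rpow_mul_exp_neg_mul_Ioi (by linarith : 0 < a + 1) hb
  rw [add_sub_cancel_right] at h
  simp only [neg_mul]
  rw [h, one_div, inv_rpow hb.le, ← rpow_neg hb.le, mul_comm]

lemma tendsto_integral_rpow_mul_exp_neg_mul_sub_div {a b : ℝ} (ha : -1 < a) (hb : 0 < b) :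
    Tendsto (fun t : ℝ => ∫ s in Ioi (0 : ℝ), s ^ a * exp (-b * s - t / s)) (𝓝[≥] 0)
      (𝓝 (Gamma (a + 1) * b ^ (-(a + 1)))) := by
  rw [← integral_rpow_mul_exp_neg_mul_Ioi_eq_Gamma ha hb]
  refine tendsto_integral_filter_of_dominated_convergence (fun s => s ^ a * exp (-b * s))
    (Eventually.of_forall fun t => ?measurable) ?bound ?integrable ?limit
  case measurable =>
    refine ContinuousOn.aestronglyMeasurable (fun s hs => ?_) measurableSet_Ioi
    have hs0 : s ≠ 0 := (mem_Ioi.1 hs).ne'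
    exact ((continuousAt_id.rpow_const (Or.inl hs0)).mul
      (by fun_prop (disch := assumption))).continuousWithinAt
  case bound =>
    filter_upwards [self_mem_nhdsWithin] with t (ht : 0 ≤ t)
    filter_upwards [self_mem_ae_restrict measurableSet_Ioi] with s (hs : 0 < s)
    rw [norm_mul, norm_of_nonneg (rpow_nonneg hs.le a), norm_of_nonneg (exp_pos _).le]
    gcongr
    linarith [div_nonneg ht hs.le]
  case integrable =>
    have h := integrableOn_rpow_mul_exp_neg_mul_rpow ha one_pos hb
    simp only [rpow_one] at h
    exact h
  case limit =>
    filter_upwards [self_mem_ae_restrict measurableSet_Ioi] with s (hs : 0 < s)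
    have hcont : Continuous fun t : ℝ => s ^ a * exp (-b * s - t / s) := by fun_prop
    simpa using (hcont.tendsto 0).mono_left nhdsWithin_le_nhds

theorem steadyDensity_finite_at_origin_general
    (n : ℕ) (lam D B mu : ℝ)
    (hlam : 0 < lam)
    (k : ℕ) (hnu : 0 < (k : ℝ) - (n : ℝ) / 2 + 1) :
    Filter.Tendsto (steadyDensity n lam D B mu k) (nhdsWithin 0 (Set.Ioi 0))
      (nhds ((mu * (lam * B) ^ k / ((Nat.factorial k : ℝ) * (4 * π * D) ^ ((n : ℝ) / 2))) *
        Real.Gamma ((k : ℝ) - (n : ℝ) / 2 + 1) *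
        lam ^ (-((k : ℝ) - (n : ℝ) / 2 + 1)))) := by
  have hscale : Tendsto (fun z : ℝ => z ^ 2 / (4 * lam)) (𝓝[>] 0) (𝓝[≥] 0) := by
    refine tendsto_nhdsWithin_iff.2 ⟨tendsto_nhdsWithin_of_tendsto_nhds ?_,
      Eventually.of_forall fun z => mem_Ici.2 (by positivity)⟩
    simpa using ((continuous_pow 2).div_const (4 * lam)).tendsto (0 : ℝ)
  have hintegral :=
    (tendsto_integral_rpow_mul_exp_neg_mul_sub_div
      (a := (k : ℝ) - n / 2) (by linarith) hlam).comp hscale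
  rw [mul_assoc]
  refine (hintegral.const_mul _).congr fun z => ?_
  simp only [Function.comp_apply, steadyDensity, div_div]

/-- If `ν = k − n/2 + 1 > 0`, then
`𝒜_k(z) → (μ(λB)^k/(k!(4πD)^{n/2})) Γ(ν) λ^{−ν}` as `z → 0⁺`. -/
theorem steadyDensity_finite_at_origin
    (n : ℕ) (hn : 1 ≤ n) (lam D B mu : ℝ)
    (hlam : 0 < lam) (hD : 0 < D) (hB : 0 < B) (hmu : 0 < mu)
    (k : ℕ) (hnu : 0 < (k : ℝ) - (n : ℝ) / 2 + 1) :
    Filter.Tendsto (steadyDensity n lam D B mu k) (nhdsWithin 0 (Set.Ioi 0))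
      (nhds ((mu * (lam * B) ^ k / ((Nat.factorial k : ℝ) * (4 * π * D) ^ ((n : ℝ) / 2))) *
        Real.Gamma ((k : ℝ) - (n : ℝ) / 2 + 1) *
        lam ^ (-((k : ℝ) - (n : ℝ) / 2 + 1)))) :=
  steadyDensity_finite_at_origin_general n lam D B mu hlam k hnu
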